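/- arXiv:2202.12367 — 3 statements merged into one kernel-verified Lean document; each statement's English description precedes it below -/
import Mathlib

section
/- Let X be a Banach space, A : X → X a bounded invertible linear operator, and f : X → X a C¹ map that is Lipschitz with constant γ such that ‖A⁻¹‖·γ < 1. Then the inverse T of F(x) = A x + f(x) is differentiable at every point ξ, with derivative DT(ξ) = (A + Df(T(ξ)))⁻¹. -/
/-! The derivative `A + Df(Tξ)` of `F` at `Tξ` is `A (1 + A⁻¹ Df(Tξ))` with
`‖A⁻¹ Df(Tξ)‖ ≤ ‖A⁻¹‖ γ < 1`, so it is invertible by the Neumann series. Moreover `F = A + f` is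
antilipschitz, since `A` is antilipschitz with constant `‖A⁻¹‖` and the perturbation `f` is
`γ`-Lipschitz with `γ < ‖A⁻¹‖⁻¹`; hence its right inverse `T` is Lipschitz, in particular
continuous, and a continuous local inverse of a map with invertible derivative is differentiable
with the inverse derivative. -/

open scoped NNReal

section

variable {𝕜 E : Type*} [NontriviallyNormedField 𝕜] [NormedAddCommGroup E] [NormedSpace 𝕜 E]

theorem ContinuousLinearEquiv.exists_coe_eq_add [CompleteSpace E] (A : E ≃L[𝕜] E)
    {B : E →L[𝕜] E} (h : ‖(A.symm : E →L[𝕜] E)‖ * ‖B‖ < 1) :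
    ∃ e : E ≃L[𝕜] E, (e : E →L[𝕜] E) = A + B := by
  have hsmall : ‖-((A.symm : E →L[𝕜] E) * B)‖ < 1 := by
    rw [norm_neg]; exact (norm_mul_le _ _).trans_lt h
  refine ⟨(ContinuousLinearEquiv.ofUnit (Units.oneSub _ hsmall)).trans A, ?_⟩
  ext x
  change A ((1 - -((A.symm : E →L[𝕜] E) * B)) x) = A x + B x
  simp

theorem lipschitzWith_of_rightInverse_add [Nontrivial E] {A : E ≃L[𝕜] E} {f T : E → E}
    {K : ℝ≥0} (hf : LipschitzWith K f) (hK : ‖(A.symm : E →L[𝕜] E)‖₊ * K < 1)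
    (hT : Function.RightInverse T (A + f)) :
    LipschitzWith (‖(A.symm : E →L[𝕜] E)‖₊⁻¹ - K)⁻¹ T := by
  have hA : ‖(A.symm : E →L[𝕜] E)‖₊ ≠ 0 := fun h0 => by
    have := A.one_le_norm_mul_norm_symm
    norm_num [← coe_nnnorm, h0] at this
  refine (A.antilipschitz.add_lipschitzWith hf ?_).to_rightInverse hT
  rwa [NNReal.lt_inv_iff_mul_lt hA, mul_comm]

theorem continuous_of_rightInverse_add {A : E ≃L[𝕜] E} {f T : E → E}
    {K : ℝ≥0} (hf : LipschitzWith K f) (hK : ‖(A.symm : E →L[𝕜] E)‖₊ * K < 1)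
    (hT : Function.RightInverse T (A + f)) : Continuous T := by
  cases subsingleton_or_nontrivial E
  · exact continuous_of_indiscreteTopology
  · exact (lipschitzWith_of_rightInverse_add hf hK hT).continuous

theorem hasFDerivAt_of_rightInverse_add [CompleteSpace E] {A : E ≃L[𝕜] E} {f T : E → E}
    {K : ℝ≥0} (hf : LipschitzWith K f) (hK : ‖(A.symm : E →L[𝕜] E)‖₊ * K < 1)
    (hT : Function.RightInverse T (A + f)) {ξ : E} (hfξ : DifferentiableAt 𝕜 f (T ξ)) :
    ∃ e : E ≃L[𝕜] E, (e : E →L[𝕜] E) = A + fderiv 𝕜 f (T ξ) ∧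
      HasFDerivAt T (e.symm : E →L[𝕜] E) ξ := by
  have hsmall : ‖(A.symm : E →L[𝕜] E)‖ * ‖fderiv 𝕜 f (T ξ)‖ < 1 :=
    calc ‖(A.symm : E →L[𝕜] E)‖ * ‖fderiv 𝕜 f (T ξ)‖ ≤ ‖(A.symm : E →L[𝕜] E)‖ * K := by
          gcongr; exact norm_fderiv_le_of_lipschitz 𝕜 hf
      _ < 1 := mod_cast hK
  obtain ⟨e, he⟩ := A.exists_coe_eq_add hsmall
  have hF : HasFDerivAt (⇑A + f) (e : E →L[𝕜] E) (T ξ) := he ▸ A.hasFDerivAt.add hfξ.hasFDerivAt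
  exact ⟨e, he, hF.of_local_left_inverse (continuous_of_rightInverse_add hf hK hT).continuousAt
    (.of_forall hT)⟩

end

theorem stmt_3_general {X : Type*} [NormedAddCommGroup X] [NormedSpace ℝ X] [CompleteSpace X]
    (A : X ≃L[ℝ] X) (f : X → X) (γ : ℝ)
    (hf1 : ContDiff ℝ 1 f)
    (hf : ∀ x y : X, ‖f x - f y‖ ≤ γ * ‖x - y‖)
    (h : ‖(A.symm : X →L[ℝ] X)‖ * γ < 1)
    (T : X → X)
    (hT : ∀ ξ : X, A (T ξ) + f (T ξ) = ξ) :
    ∀ ξ : X, ∃ L : X →L[ℝ] X, HasFDerivAt T L ξ ∧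
      ((A : X →L[ℝ] X) + fderiv ℝ f (T ξ)).comp L = ContinuousLinearMap.id ℝ X ∧
      L.comp ((A : X →L[ℝ] X) + fderiv ℝ f (T ξ)) = ContinuousLinearMap.id ℝ X := by
  intro ξ
  have hlip : LipschitzWith γ.toNNReal f := .of_dist_le' fun x y => by
    simpa only [dist_eq_norm] using hf x y
  have hK : ‖(A.symm : X →L[ℝ] X)‖₊ * γ.toNNReal < 1 := by
    rw [← NNReal.coe_lt_coe, NNReal.coe_mul, coe_nnnorm, Real.coe_toNNReal',
      mul_max_of_nonneg _ _ (norm_nonneg _)]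
    simpa using h
  obtain ⟨e, he, hTe⟩ := hasFDerivAt_of_rightInverse_add hlip hK hT
    ((hf1.differentiable one_ne_zero).differentiableAt)
  refine ⟨e.symm, hTe, ?_, ?_⟩ <;> rw [← he]
  · exact e.coe_comp_coe_symm
  · exact e.coe_symm_comp_coe

theorem stmt_3 {X : Type*} [NormedAddCommGroup X] [NormedSpace ℝ X] [CompleteSpace X]
    (A : X ≃L[ℝ] X) (f : X → X) (γ : ℝ)
    (hf1 : ContDiff ℝ 1 f)
    (hf : ∀ x y : X, ‖f x - f y‖ ≤ γ * ‖x - y‖)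
    (h : ‖(A.symm : X →L[ℝ] X)‖ * γ < 1)
    (T : X → X)
    (hT : ∀ ξ : X, A (T ξ) + f (T ξ) = ξ)
    (hT' : ∀ x : X, T (A x + f x) = x) :
    ∀ ξ : X, ∃ L : X →L[ℝ] X, HasFDerivAt T L ξ ∧
      ((A : X →L[ℝ] X) + fderiv ℝ f (T ξ)).comp L = ContinuousLinearMap.id ℝ X ∧
      L.comp ((A : X →L[ℝ] X) + fderiv ℝ f (T ξ)) = ContinuousLinearMap.id ℝ X :=
  stmt_3_general A f γ hf1 hf h T hT
end

section
/- Let X be a Banach space and h̄ : X → X a C¹ map with ‖Dh̄(x)‖ < 1 for all x. Suppose h : X → X is a continuous map satisfying h(ξ) = -h̄(ξ + h(ξ)) for all ξ ∈ X. Then h is differentiable at every ξ, with derivative Dh(ξ) = -(Id + Dh̄(ξ + h(ξ)))⁻¹ ∘ Dh̄(ξ + h(ξ)), and h is C¹. -/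
/-!
Put `F x = x + h̄ x` and `g ξ = ξ + h ξ`. The functional equation says exactly `F ∘ g = id`.
Since `‖Dh̄‖ < 1`, the mean value theorem on a compact segment makes `h̄` a strict contraction
pointwise, so `F` is injective and `g` is its two-sided inverse. Each `DF(x) = Id + Dh̄(x)` is
invertible by the Neumann series, so the inverse function theorem makes `g` a `C¹` map with
`Dg(ξ) = DF(g ξ)⁻¹`, and `h = g - id` inherits all of this.
-/

open Topology

section

variable {E F : Type*} [NormedAddCommGroup E] [NormedAddCommGroup F]

theorem ContDiff.norm_sub_lt_of_norm_fderiv_lt [NormedSpace ℝ E] [NormedSpace ℝ F] {f : E → F}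
    {C : ℝ} (hf : ContDiff ℝ 1 f) (hC : ∀ z, ‖fderiv ℝ f z‖ < C) {x y : E} (hxy : x ≠ y) :
    ‖f x - f y‖ < C * ‖x - y‖ := by
  have hseg : IsCompact (segment ℝ y x) := by
    rw [segment_eq_image_lineMap]
    exact isCompact_Icc.image AffineMap.lineMap_continuous
  obtain ⟨z, -, hz⟩ := hseg.exists_isMaxOn ⟨y, left_mem_segment ℝ y x⟩
    (hf.continuous_fderiv one_ne_zero).norm.continuousOn
  calc ‖f x - f y‖ ≤ ‖fderiv ℝ f z‖ * ‖x - y‖ :=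
        (convex_segment y x).norm_image_sub_le_of_norm_fderiv_le
          (fun w _ ↦ (hf.differentiable one_ne_zero) w) (fun w hw ↦ hz hw)
          (left_mem_segment ℝ y x) (right_mem_segment ℝ y x)
    _ < C * ‖x - y‖ := mul_lt_mul_of_pos_right (hC z) (norm_pos_iff.2 (sub_ne_zero.2 hxy))

theorem injective_add_of_norm_sub_lt {f : E → E} (hf : ∀ x y, x ≠ y → ‖f x - f y‖ < ‖x - y‖) :
    Function.Injective fun x ↦ x + f x := by
  intro x y (hxy : x + f x = y + f y)
  by_contra hne
  have hswap : f x - f y = y - x := by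
    rw [sub_eq_sub_iff_add_eq_add, add_comm (f x), hxy, add_comm]
  simpa [hswap, norm_sub_rev] using hf x y hne

variable {𝕜 : Type*} [RCLike 𝕜] [NormedSpace 𝕜 E] [NormedSpace 𝕜 F]

noncomputable def idAddOfNormLtOne [CompleteSpace E] (T : E →L[𝕜] E) (hT : ‖T‖ < 1) :
    E ≃L[𝕜] E :=
  .ofUnit (Units.oneSub (-T) (by rwa [norm_neg]))

@[simp]
theorem coe_idAddOfNormLtOne [CompleteSpace E] (T : E →L[𝕜] E) (hT : ‖T‖ < 1) :
    (idAddOfNormLtOne T hT : E →L[𝕜] E) = ContinuousLinearMap.id 𝕜 E + T := by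
  ext x
  show (1 - -T) x = x + T x
  simp

theorem ContDiffAt.to_local_left_inverse [CompleteSpace E] {n : WithTop ℕ∞} {f : E → F}
    {g : F → E} {f' : E ≃L[𝕜] F} {a : E} (hf : ContDiffAt 𝕜 n f a)
    (hf' : HasFDerivAt f (f' : E →L[𝕜] F) a) (hn : n ≠ 0) (hg : ∀ᶠ x in 𝓝 a, g (f x) = x) :
    ContDiffAt 𝕜 n g (f a) :=
  (hf.to_localInverse hf' hn).congr_of_eventuallyEq
    ((hf.hasStrictFDerivAt' hf' hn).localInverse_unique hg)

end

theorem stmt_9_general {X : Type*} [NormedAddCommGroup X] [NormedSpace ℝ X] [CompleteSpace X]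
    (hbar : X → X) (h : X → X)
    (hbar1 : ContDiff ℝ 1 hbar)
    (hder : ∀ x : X, ‖fderiv ℝ hbar x‖ < 1)
    (heq : ∀ ξ : X, h ξ = -hbar (ξ + h ξ)) :
    (∀ ξ : X, ∃ L : X →L[ℝ] X, HasFDerivAt h L ξ ∧
      (ContinuousLinearMap.id ℝ X + fderiv ℝ hbar (ξ + h ξ)).comp L
        = -(fderiv ℝ hbar (ξ + h ξ))) ∧ ContDiff ℝ 1 h := by
  set F : X → X := fun x ↦ x + hbar x
  set g : X → X := fun ξ ↦ ξ + h ξ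
  have hF : ContDiff ℝ 1 F := contDiff_id.add hbar1
  have hFg (ξ : X) : F (g ξ) = ξ := by
    show ξ + h ξ + hbar (ξ + h ξ) = ξ
    rw [← neg_eq_iff_eq_neg.2 (heq ξ), add_neg_cancel_right]
  have hgF (x : X) : g (F x) = x :=
    injective_add_of_norm_sub_lt (fun x y ↦ by simpa using hbar1.norm_sub_lt_of_norm_fderiv_lt hder)
      (hFg (F x))
  have hh : h = fun ξ ↦ g ξ - ξ := by funext ξ; simp [g]
  let e (ξ : X) : X ≃L[ℝ] X := idAddOfNormLtOne (fderiv ℝ hbar (g ξ)) (hder (g ξ))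
  have hFe (ξ : X) : HasFDerivAt F (e ξ : X →L[ℝ] X) (g ξ) := by
    rw [coe_idAddOfNormLtOne]
    exact (hasFDerivAt_id (g ξ)).add ((hbar1.differentiable one_ne_zero) (g ξ)).hasFDerivAt
  have hgF_nhds (ξ : X) : ∀ᶠ x in 𝓝 (g ξ), g (F x) = x := .of_forall hgF
  refine ⟨fun ξ ↦ ⟨(e ξ).symm - ContinuousLinearMap.id ℝ X, ?_, ?_⟩, ?_⟩
  · have hg : HasStrictFDerivAt g ((e ξ).symm : X →L[ℝ] X) ξ := by
      simpa [hFg] using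
        (hF.contDiffAt.hasStrictFDerivAt' (hFe ξ) one_ne_zero).to_local_left_inverse (hgF_nhds ξ)
    rw [hh]
    exact hg.hasFDerivAt.sub (hasFDerivAt_id ξ)
  · have hcomp := (e ξ).coe_comp_coe_symm
    simp only [e, coe_idAddOfNormLtOne] at hcomp
    rw [ContinuousLinearMap.comp_sub, hcomp, ContinuousLinearMap.comp_id]
    abel
  · refine contDiff_iff_contDiffAt.2 fun ξ ↦ ?_
    have hg : ContDiffAt ℝ 1 g ξ := by
      simpa [hFg] using hF.contDiffAt.to_local_left_inverse (hFe ξ) one_ne_zero (hgF_nhds ξ)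
    rw [hh]
    exact hg.sub contDiffAt_id

theorem stmt_9 {X : Type*} [NormedAddCommGroup X] [NormedSpace ℝ X] [CompleteSpace X]
    (hbar : X → X) (h : X → X)
    (hbar1 : ContDiff ℝ 1 hbar)
    (hder : ∀ x : X, ‖fderiv ℝ hbar x‖ < 1)
    (hcont : Continuous h)
    (heq : ∀ ξ : X, h ξ = -hbar (ξ + h ξ)) :
    (∀ ξ : X, ∃ L : X →L[ℝ] X, HasFDerivAt h L ξ ∧
      (ContinuousLinearMap.id ℝ X + fderiv ℝ hbar (ξ + h ξ)).comp L
        = -(fderiv ℝ hbar (ξ + h ξ))) ∧ ContDiff ℝ 1 h :=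
  stmt_9_general hbar h hbar1 hder heq
end

section
/- Let λ > 0 and let M = ∏_{j∈ℤ}(1 + e^{-λ|j|}), which is finite. Suppose (γ_k)_{k∈ℤ} are nonnegative reals with γ_k ≤ 1/(e^{λ(|k|+1)} + e^{λ}) for all k and Σ_{k∈ℤ} γ_k < 1/(e^{λ}M). Then for every n ∈ ℤ, Σ_{k<n} e^{-λ(n-k-1)} γ_k ∏_{j=k}^{n-1} (e^{λ}/(1 - e^{λ}γ_j)) + Σ_{k>n} e^{-λ(k+1-n)} γ_k ∏_{j=n}^{k-1} (e^{λ} + γ_j) + e^{-λ}γ_n < 1. -/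
/-!
The smallness condition on `γ j` bounds both kinds of factors, `exp λ / (1 - exp λ * γ j)` and
`exp λ + γ j`, by `exp λ * (1 + exp (-λ |j|))`. Hence a product over `j ∈ [a, b)` is at most
`exp (λ (b - a)) * M`, and the exponential weight in front of it cancels the growth: the `k`-th
term is at most `exp λ * M * γ k`. Summing over `k` gives at most `exp λ * M * ∑ γ k < 1`.
-/

open Real Finset

theorem one_le_one_add_exp (x : ℝ) : 1 ≤ 1 + exp x :=
  le_add_of_nonneg_right (exp_pos x).le

theorem prod_le_tprod_of_one_le {ι : Type*} {f : ι → ℝ} (hf1 : ∀ i, 1 ≤ f i)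
    (hf : Multipliable f) (s : Finset ι) : ∏ i ∈ s, f i ≤ ∏' i, f i :=
  ge_of_tendsto hf.hasProd <| Filter.eventually_atTop.2 ⟨s, fun _ hst =>
    prod_le_prod_of_subset_of_one_le hst (fun i _ => zero_le_one.trans (hf1 i))
      fun i _ _ => hf1 i⟩

theorem one_le_tprod_of_one_le {ι : Type*} {f : ι → ℝ} (hf1 : ∀ i, 1 ≤ f i)
    (hf : Multipliable f) : 1 ≤ ∏' i, f i := by
  simpa using prod_le_tprod_of_one_le hf1 hf ∅

theorem prod_le_pow_card_mul_tprod {ι : Type*} {f g : ι → ℝ} {c : ℝ} (hc : 0 ≤ c)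
    (hf1 : ∀ i, 1 ≤ f i) (hf : Multipliable f) (hg0 : ∀ i, 0 ≤ g i)
    (hg : ∀ i, g i ≤ c * f i) (s : Finset ι) : ∏ i ∈ s, g i ≤ c ^ #s * ∏' i, f i :=
  calc ∏ i ∈ s, g i ≤ ∏ i ∈ s, c * f i := prod_le_prod (fun i _ => hg0 i) fun i _ => hg i
    _ = c ^ #s * ∏ i ∈ s, f i := by rw [prod_mul_distrib, prod_const]
    _ ≤ c ^ #s * ∏' i, f i := by gcongr; exact prod_le_tprod_of_one_le hf1 hf s

theorem exp_neg_mul_mul_prod_Ico_le_tprod {lam : ℝ} {f g : ℤ → ℝ} (hf1 : ∀ j, 1 ≤ f j)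
    (hf : Multipliable f) (hg0 : ∀ j, 0 ≤ g j) (hg : ∀ j, g j ≤ exp lam * f j) {a b : ℤ}
    (hab : a ≤ b) : exp (-lam * (b - a)) * ∏ j ∈ Ico a b, g j ≤ ∏' j, f j := by
  have hcard : ((#(Ico a b) : ℕ) : ℝ) = b - a := by
    rw [Int.card_Ico, ← Int.cast_natCast, Int.toNat_of_nonneg (by omega), Int.cast_sub]
  have hprod := prod_le_pow_card_mul_tprod (exp_pos lam).le hf1 hf hg0 hg (Ico a b)
  rw [← exp_nat_mul, hcard] at hprod
  calc exp (-lam * (b - a)) * ∏ j ∈ Ico a b, g j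
      ≤ exp (-lam * (b - a)) * (exp ((b - a) * lam) * ∏' j, f j) := by gcongr
    _ = ∏' j, f j := by rw [← mul_assoc, ← exp_add]; ring_nf; rw [exp_zero, one_mul]

theorem summable_exp_neg_mul_abs_int {lam : ℝ} (hlam : 0 < lam) :
    Summable fun k : ℤ => exp (-lam * |(k : ℝ)|) := by
  have h := Real.summable_exp_nat_mul_iff.mpr (neg_neg_of_pos hlam)
  refine .of_nat_of_neg ?_ ?_ <;> simpa [mul_comm] using h

theorem tsum_lt_add_tsum_gt_add_self {ι α : Type*} [LinearOrder ι] [AddCommGroup α]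
    [UniformSpace α] [IsUniformAddGroup α] [CompleteSpace α] [T2Space α] {f : ι → α}
    (hf : Summable f) (n : ι) :
    ∑' k : {k // k < n}, f k + ∑' k : {k // n < k}, f k + f n = ∑' k, f k := by
  classical
  have hlt := hasSum_subtype_iff_indicator (s := {k | k < n}) |>.1 (hf.subtype _).hasSum
  have hgt := hasSum_subtype_iff_indicator (s := {k | n < k}) |>.1 (hf.subtype _).hasSum
  refine ((hlt.add hgt).add (hasSum_ite_eq n (f n))).unique ?_
  convert hf.hasSum using 1
  funext k
  rcases lt_trichotomy k n with h | rfl | h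
  · simp [Set.indicator, h, h.not_gt, h.ne]
  · simp [Set.indicator]
  · simp [Set.indicator, h, h.not_gt, h.ne']

theorem tsum_le_mul_tsum {ι : Type*} {F γ : ι → ℝ} {c : ℝ} (hF0 : ∀ i, 0 ≤ F i)
    (hF : ∀ i, F i ≤ c * γ i) (hγ : Summable γ) : ∑' i, F i ≤ c * ∑' i, γ i := by
  rw [← tsum_mul_left]
  exact Summable.tsum_le_tsum hF (.of_nonneg_of_le hF0 hF (hγ.mul_left c)) (hγ.mul_left c)

section SmallWeight

variable {lam t g : ℝ}

theorem exp_mul_add_one_add_exp :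
    exp (lam * (t + 1)) + exp lam = exp lam * (exp (lam * t) + 1) := by
  rw [mul_add_one, exp_add]; ring

theorem exp_mul_le_inv_exp_mul_add_one (hg : g ≤ 1 / (exp (lam * (t + 1)) + exp lam)) :
    exp lam * g ≤ (exp (lam * t) + 1)⁻¹ := by
  rw [exp_mul_add_one_add_exp, one_div, mul_inv] at hg
  calc exp lam * g ≤ exp lam * ((exp lam)⁻¹ * (exp (lam * t) + 1)⁻¹) := by gcongr
    _ = (exp (lam * t) + 1)⁻¹ := by rw [mul_inv_cancel_left₀ (exp_pos lam).ne']

theorem one_sub_exp_mul_pos (hg : g ≤ 1 / (exp (lam * (t + 1)) + exp lam)) :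
    0 < 1 - exp lam * g := by
  have := exp_mul_le_inv_exp_mul_add_one hg
  have : (exp (lam * t) + 1)⁻¹ < 1 := inv_lt_one_of_one_lt₀ (by linarith [exp_pos (lam * t)])
  linarith

theorem exp_div_one_sub_exp_mul_le (hg : g ≤ 1 / (exp (lam * (t + 1)) + exp lam)) :
    exp lam / (1 - exp lam * g) ≤ exp lam * (1 + exp (-lam * t)) := by
  have hE := exp_pos (lam * t)
  have hden : exp (lam * t) / (exp (lam * t) + 1) ≤ 1 - exp lam * g := by
    have hsub : exp (lam * t) / (exp (lam * t) + 1) = 1 - (exp (lam * t) + 1)⁻¹ := by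
      field_simp; ring
    linarith [exp_mul_le_inv_exp_mul_add_one hg]
  calc exp lam / (1 - exp lam * g) ≤ exp lam / (exp (lam * t) / (exp (lam * t) + 1)) :=
        div_le_div_of_nonneg_left (exp_pos lam).le (by positivity) hden
    _ = exp lam * (1 + exp (-lam * t)) := by rw [neg_mul, exp_neg]; field_simp

theorem exp_add_le (hlam : 0 ≤ lam) (hg : g ≤ 1 / (exp (lam * (t + 1)) + exp lam)) :
    exp lam + g ≤ exp lam * (1 + exp (-lam * t)) := by
  have hE := exp_pos (lam * t)
  have ha : 1 ≤ exp lam := one_le_exp hlam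
  have hg' : g ≤ exp lam * exp (-lam * t) :=
    calc g ≤ (exp lam * (exp (lam * t) + 1))⁻¹ := by
          rwa [exp_mul_add_one_add_exp, one_div] at hg
      _ ≤ (exp (lam * t))⁻¹ := inv_anti₀ hE (by nlinarith)
      _ ≤ exp lam * exp (-lam * t) := by
        rw [neg_mul, exp_neg]; exact le_mul_of_one_le_left (inv_pos.2 hE).le ha
  linarith

end SmallWeight

section Weights

variable {lam : ℝ} {γ : ℤ → ℝ}

theorem summable_of_le_one_div_exp_add_exp (hlam : 0 < lam)
    (hγ0 : ∀ k, 0 ≤ γ k)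
    (hγ : ∀ k : ℤ, γ k ≤ 1 / (exp (lam * (|(k : ℝ)| + 1)) + exp lam)) :
    Summable γ :=
  .of_nonneg_of_le hγ0 (fun k => by linarith [exp_add_le hlam.le (hγ k)])
    ((summable_exp_neg_mul_abs_int hlam).mul_left (exp lam))

theorem exp_neg_mul_mul_prod_Ico_div_one_sub_le
    (hM : Multipliable (fun j : ℤ => 1 + exp (-lam * |(j : ℝ)|)))
    (hγ : ∀ j : ℤ, γ j ≤ 1 / (exp (lam * (|(j : ℝ)| + 1)) + exp lam)) {k n : ℤ}
    (hk : 0 ≤ γ k) (hkn : k ≤ n) :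
    exp (-lam * (n - k - 1)) * γ k * ∏ j ∈ Ico k n, exp lam / (1 - exp lam * γ j) ≤
      exp lam * (∏' j : ℤ, (1 + exp (-lam * |(j : ℝ)|))) * γ k := by
  have hprod := exp_neg_mul_mul_prod_Ico_le_tprod
    (fun _ => one_le_one_add_exp _) hM
    (fun j => div_nonneg (exp_pos lam).le (one_sub_exp_mul_pos (hγ j)).le)
    (fun j => exp_div_one_sub_exp_mul_le (hγ j)) hkn
  have hexp : exp (-lam * (n - k - 1)) = exp lam * exp (-lam * (n - k)) := by
    rw [← exp_add]; ring_nf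
  calc exp (-lam * (n - k - 1)) * γ k * ∏ j ∈ Ico k n, exp lam / (1 - exp lam * γ j)
      = exp lam * γ k *
          (exp (-lam * (n - k)) * ∏ j ∈ Ico k n, exp lam / (1 - exp lam * γ j)) := by
        rw [hexp]; ring
    _ ≤ exp lam * γ k * ∏' j : ℤ, (1 + exp (-lam * |(j : ℝ)|)) :=
        mul_le_mul_of_nonneg_left hprod (mul_nonneg (exp_pos lam).le hk)
    _ = _ := by ring

theorem exp_neg_mul_mul_prod_Ico_add_le (hlam : 0 ≤ lam)
    (hM : Multipliable (fun j : ℤ => 1 + exp (-lam * |(j : ℝ)|))) (hγ0 : ∀ j, 0 ≤ γ j)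
    (hγ : ∀ j : ℤ, γ j ≤ 1 / (exp (lam * (|(j : ℝ)| + 1)) + exp lam)) {k n : ℤ}
    (hnk : n ≤ k) :
    exp (-lam * (k + 1 - n)) * γ k * ∏ j ∈ Ico n k, (exp lam + γ j) ≤
      exp lam * (∏' j : ℤ, (1 + exp (-lam * |(j : ℝ)|))) * γ k := by
  have hprod := exp_neg_mul_mul_prod_Ico_le_tprod
    (fun _ => one_le_one_add_exp _) hM
    (fun j => add_nonneg (exp_pos lam).le (hγ0 j)) (fun j => exp_add_le hlam (hγ j)) hnk
  have hexp : exp (-lam * (k + 1 - n)) = exp (-lam) * exp (-lam * (k - n)) := by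
    rw [← exp_add]; ring_nf
  calc exp (-lam * (k + 1 - n)) * γ k * ∏ j ∈ Ico n k, (exp lam + γ j)
      = exp (-lam) * γ k * (exp (-lam * (k - n)) * ∏ j ∈ Ico n k, (exp lam + γ j)) := by
        rw [hexp]; ring
    _ ≤ exp (-lam) * γ k * ∏' j : ℤ, (1 + exp (-lam * |(j : ℝ)|)) :=
        mul_le_mul_of_nonneg_left hprod (mul_nonneg (exp_pos _).le (hγ0 k))
    _ ≤ exp lam * γ k * ∏' j : ℤ, (1 + exp (-lam * |(j : ℝ)|)) := by
        have hγk := hγ0 k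
        have hexp_le : exp (-lam) ≤ exp lam := exp_le_exp.2 (by linarith)
        have hM1 := one_le_tprod_of_one_le (fun _ => one_le_one_add_exp _) hM
        gcongr
    _ = _ := by ring

end Weights

open Real in
theorem stmt_12 (lam : ℝ) (hlam : 0 < lam)
    (hM : Multipliable (fun j : ℤ => 1 + exp (-lam * |(j : ℝ)|)))
    (γ : ℤ → ℝ) (hγ0 : ∀ k, 0 ≤ γ k)
    (hγ1 : ∀ k : ℤ, γ k ≤ 1 / (exp (lam * (|(k : ℝ)| + 1)) + exp lam))
    (hγ2 : ∑' k : ℤ, γ k < 1 / (exp lam * ∏' j : ℤ, (1 + exp (-lam * |(j : ℝ)|)))) :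
    ∀ n : ℤ,
      (∑' k : {k : ℤ // k < n}, exp (-lam * ((n : ℝ) - (k : ℤ) - 1)) * γ k *
          ∏ j ∈ Finset.Ico (k : ℤ) n, (exp lam / (1 - exp lam * γ j))) +
      (∑' k : {k : ℤ // n < k}, exp (-lam * (((k : ℤ) : ℝ) + 1 - n)) * γ k *
          ∏ j ∈ Finset.Ico n (k : ℤ), (exp lam + γ j)) +
      exp (-lam) * γ n < 1 := by
  intro n
  set M := ∏' j : ℤ, (1 + exp (-lam * |(j : ℝ)|))
  have hM1 : 1 ≤ M := one_le_tprod_of_one_le (fun _ => one_le_one_add_exp _) hM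
  have hγ := summable_of_le_one_div_exp_add_exp hlam hγ0 hγ1
  have hpos : 0 < exp lam * M := by positivity
  have hfac (j : ℤ) : 0 ≤ exp lam / (1 - exp lam * γ j) :=
    div_nonneg (exp_pos lam).le (one_sub_exp_mul_pos (hγ1 j)).le
  calc _ ≤ exp lam * M * ∑' k : {k : ℤ // k < n}, γ k +
        exp lam * M * ∑' k : {k : ℤ // n < k}, γ k + exp lam * M * γ n := by
        gcongr ?_ + ?_ + ?_
        · exact tsum_le_mul_tsum
            (fun k => mul_nonneg (mul_nonneg (exp_pos _).le (hγ0 k))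
              (prod_nonneg fun j _ => hfac j))
            (fun k => exp_neg_mul_mul_prod_Ico_div_one_sub_le hM hγ1 (hγ0 k) k.2.le)
            (hγ.subtype _)
        · exact tsum_le_mul_tsum
            (fun k => mul_nonneg (mul_nonneg (exp_pos _).le (hγ0 k))
              (prod_nonneg fun j _ => add_nonneg (exp_pos _).le (hγ0 j)))
            (fun k => exp_neg_mul_mul_prod_Ico_add_le hlam.le hM hγ0 hγ1 k.2.le)
            (hγ.subtype _)
        · refine mul_le_mul_of_nonneg_right ?_ (hγ0 n)
          calc exp (-lam) ≤ exp lam := exp_le_exp.2 (by linarith)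
            _ ≤ exp lam * M := le_mul_of_one_le_right (exp_pos lam).le hM1
    _ = exp lam * M * ∑' k, γ k := by rw [← tsum_lt_add_tsum_gt_add_self hγ n]; ring
    _ < 1 := by rwa [lt_div_iff₀ hpos, mul_comm] at hγ2
end
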